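/- arXiv:1102.0989 — 6 statements merged into one kernel-verified Lean document; each statement's English description precedes it below -/
import Mathlib

section
/- Let $K$ be a finite set and let $r_k, s_k \in \mathbb{R}$ for $k \in K$. Let $A_K$ be the $2^{|K|} \times 2^{|K|}$ matrix indexed by subsets $I, J \subseteq K$ with entries $(A_K)_{I,J} = \prod_{k \in I \cap J} s_k \cdot \prod_{k \in I \setminus J} r_k$. Then $\det A_K = \prod_{k \in K} (s_k - r_k)^{2^{|K|-1}}$. -/
/-!
Encoding a subset `I ⊆ K` by its indicator `K → Fin 2`, the entry `(A_K)_{I,J}` becomes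
`∏ k, B_k (1_I k) (1_J k)` with `B_k = !![1, 1; r k, s k]`, so `A_K` is, up to a simultaneous
permutation of rows and columns, the Kronecker product of the `2 × 2` matrices `B_k`.
Peeling off one factor at a time, `det (B ⊗ₖ A) = det B ^ card A * det A ^ card B` gives
`det (⨂ₖ B_k) = ∏ₖ det B_k ^ (2 ^ (|K| - 1))`, and `det B_k = s k - r k`.
-/

open Finset
open scoped Kronecker

theorem Fintype.prod_pow_pow_card_sub_one_pow {ι M : Type*} [Fintype ι] [CommMonoid M]
    (f : ι → M) (N : ℕ) :
    ∏ i, (f i ^ N ^ (Fintype.card ι - 1)) ^ N = ∏ i, f i ^ N ^ Fintype.card ι := by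
  rcases isEmpty_or_nonempty ι with hι | hι
  · simp
  · simp_rw [← pow_mul, ← pow_succ, Nat.sub_add_cancel Fintype.card_pos]

namespace Matrix

variable {ι κ m n R : Type*} [Fintype ι] [Fintype κ]

def piKronecker [CommMonoid R] (B : ι → Matrix m n R) : Matrix (ι → m) (ι → n) R :=
  fun x y => ∏ i, B i (x i) (y i)

theorem piKronecker_comp_equiv [CommMonoid R] (e : ι ≃ κ) (B : κ → Matrix m n R) :
    piKronecker (B ∘ e) =
      (piKronecker B).submatrix (e.arrowCongr (.refl m)) (e.arrowCongr (.refl n)) := by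
  ext x y
  simp only [piKronecker, submatrix_apply]
  rw [← e.prod_comp]
  simp

theorem piKronecker_option [CommMonoid R] (B : Option ι → Matrix m n R) :
    piKronecker B =
      (B none ⊗ₖ piKronecker (B ∘ some)).submatrix Equiv.piOptionEquivProd
        Equiv.piOptionEquivProd := by
  ext x y
  exact Fintype.prod_option _

theorem det_piKronecker [CommRing R] [DecidableEq ι] [Fintype n] [DecidableEq n]
    (B : ι → Matrix n n R) :
    (piKronecker B).det = ∏ i, (B i).det ^ Fintype.card n ^ (Fintype.card ι - 1) := by
  -- the induction replaces the `Fintype` instance, so the `DecidableEq` instance must move too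
  revert B
  refine Fintype.induction_empty_option
    (P := fun ι _ => ∀ [DecidableEq ι] (B : ι → Matrix n n R),
      (piKronecker B).det = ∏ i, (B i).det ^ Fintype.card n ^ (Fintype.card ι - 1)) ?_ ?_ ?_ ι
  · intro α β _ e ih _ B
    let _ : Fintype α := .ofEquiv β e.symm
    let _ := e.decidableEq
    rw [← det_submatrix_equiv_self (e.arrowCongr (.refl n)), ← piKronecker_comp_equiv, ih,
      Fintype.card_congr e, ← e.prod_comp]
    rfl
  · intro _ B
    simp [det_unique, piKronecker]
  · intro α _ ih _ B
    classical
    rw [piKronecker_option, det_submatrix_equiv_self, det_kronecker, ih, Fintype.prod_option,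
      Fintype.card_option, Nat.add_sub_cancel, Fintype.card_pi, prod_const, card_univ, ← prod_pow]
    exact congrArg (_ * ·) (Fintype.prod_pow_pow_card_sub_one_pow _ _)

end Matrix

def Finset.equivFinTwoFun (K : Type*) [Fintype K] [DecidableEq K] : Finset K ≃ (K → Fin 2) where
  toFun I k := if k ∈ I then 1 else 0
  invFun x := {k | x k = 1}
  left_inv I := by ext; simp
  right_inv x := by ext k; by_cases h : x k = 1 <;> simp [h]; omega

theorem Finset.prod_inter_mul_prod_sdiff_eq_prod_finTwo {K M : Type*} [Fintype K] [DecidableEq K]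
    [CommMonoid M] (r s : K → M) (I J : Finset K) :
    (∏ k ∈ I ∩ J, s k) * ∏ k ∈ I \ J, r k =
      ∏ k, !![1, 1; r k, s k] (equivFinTwoFun K I k) (equivFinTwoFun K J k) := by
  calc (∏ k ∈ I ∩ J, s k) * ∏ k ∈ I \ J, r k
        = ∏ k ∈ I, if k ∈ J then s k else r k := by
        rw [prod_ite, filter_mem_eq_inter, filter_notMem_eq_sdiff]
    _ = ∏ k, if k ∈ I then (if k ∈ J then s k else r k) else 1 :=
        (Fintype.prod_ite_mem ..).symm
    _ = _ := by
        refine prod_congr rfl fun k _ => ?_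
        by_cases hI : k ∈ I <;> by_cases hJ : k ∈ J <;> simp [equivFinTwoFun, hI, hJ]

open Finset in
theorem det_box_vertex_matrix (K : Type*) [Fintype K] [DecidableEq K]
    (r s : K → ℝ) :
    Matrix.det (fun I J : Finset K => (∏ k ∈ I ∩ J, s k) * ∏ k ∈ I \ J, r k) =
      ∏ k : K, (s k - r k) ^ (2 ^ (Fintype.card K - 1)) := by
  have hA : (fun I J : Finset K => (∏ k ∈ I ∩ J, s k) * ∏ k ∈ I \ J, r k) =
      (Matrix.piKronecker fun k => !![1, 1; r k, s k]).submatrix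
        (equivFinTwoFun K) (equivFinTwoFun K) := by
    ext I J
    exact prod_inter_mul_prod_sdiff_eq_prod_finTwo r s I J
  rw [hA, Matrix.det_submatrix_equiv_self, Matrix.det_piKronecker, Fintype.card_fin]
  simp [Matrix.det_fin_two_of]
end

section
/- Let $f : \mathbb{R}^n \to \mathbb{R}$ be smooth. Then $f$ is the sum of a multilinear function and an additively separable function if and only if $\partial_i \partial_i \partial_j f = 0$ for all $i \neq j$. -/
open Finset
open scoped ContDiff


/-- Partial derivative of `f : (Fin n → ℝ) → ℝ` in coordinate `i`. -/
noncomputable def pderiv' {n : ℕ} (i : Fin n) (f : (Fin n → ℝ) → ℝ) :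
    (Fin n → ℝ) → ℝ :=
  fun x => fderiv ℝ f x (Pi.single i 1)

variable {n : ℕ}

noncomputable def Q (d : Finset (Fin n) → ℝ) (x : Fin n → ℝ) : ℝ :=
  ∑ I : Finset (Fin n), d I * ∏ i ∈ I, x i

lemma hasFDerivAt_Q (d : Finset (Fin n) → ℝ) (x : Fin n → ℝ) :
    HasFDerivAt (Q d)
      (∑ I : Finset (Fin n), d I • ∑ i ∈ I, (∏ j ∈ I.erase i, x j) •
        (ContinuousLinearMap.proj i : (Fin n → ℝ) →L[ℝ] ℝ)) x := by
  apply HasFDerivAt.fun_sum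
  intro I _
  exact (hasFDerivAt_finset_prod (u := I)).const_mul (d I)

def sh (j : Fin n) (d : Finset (Fin n) → ℝ) : Finset (Fin n) → ℝ :=
  fun I => if j ∈ I then 0 else d (insert j I)

lemma Qapply (d : Finset (Fin n) → ℝ) (x : Fin n → ℝ) (j : Fin n) :
    (∑ I : Finset (Fin n), d I • ∑ i ∈ I, (∏ m ∈ I.erase i, x m) •
      (ContinuousLinearMap.proj i : (Fin n → ℝ) →L[ℝ] ℝ)) (Pi.single j 1) = Q (sh j d) x := by
  rw [ContinuousLinearMap.sum_apply]
  have h1 : ∀ I : Finset (Fin n),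
      (d I • ∑ i ∈ I, (∏ m ∈ I.erase i, x m) •
        (ContinuousLinearMap.proj i : (Fin n → ℝ) →L[ℝ] ℝ)) (Pi.single j 1)
      = if j ∈ I then d I * ∏ m ∈ I.erase j, x m else 0 := by
    intro I
    rw [ContinuousLinearMap.smul_apply, ContinuousLinearMap.sum_apply]
    simp only [ContinuousLinearMap.smul_apply, ContinuousLinearMap.proj_apply,
      Pi.single_apply, smul_eq_mul, mul_ite, mul_one, mul_zero]
    rw [Finset.sum_ite_eq' I j (fun i => ∏ m ∈ I.erase i, x m)]
    split_ifs with h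
    · ring
    · simp
  simp only [h1]
  -- now reindex
  rw [Finset.sum_ite, Finset.sum_const_zero, add_zero]
  unfold Q sh
  simp only [ite_mul, zero_mul]
  rw [Finset.sum_ite, Finset.sum_const_zero, zero_add]
  apply Finset.sum_nbij' (fun I => I.erase j) (fun I => insert j I)
  · intro I hI; simp only [Finset.mem_filter] at *; simp [Finset.mem_erase, hI.2]
  · intro I hI; simp only [Finset.mem_filter] at *; simp [hI.2]
  · intro I hI; simp only [Finset.mem_filter] at hI; exact Finset.insert_erase hI.2
  · intro I hI; simp only [Finset.mem_filter] at hI; exact Finset.erase_insert hI.2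
  · intro I hI; simp only [Finset.mem_filter] at hI
    rw [Finset.insert_erase hI.2]

lemma pderiv_Q (d : Finset (Fin n) → ℝ) (j : Fin n) : pderiv' j (Q d) = Q (sh j d) := by
  funext x
  show fderiv ℝ (Q d) x (Pi.single j 1) = _
  have h := (hasFDerivAt_Q d x).fderiv
  rw [h, Qapply]

lemma sh_sh (i : Fin n) (e : Finset (Fin n) → ℝ) : sh i (sh i e) = fun _ => 0 := by
  funext I
  simp [sh]

lemma Q_zero : Q (fun _ => (0:ℝ)) = fun _ : Fin n → ℝ => (0:ℝ) := by
  funext x; unfold Q; simp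

lemma contDiff_Q (d : Finset (Fin n) → ℝ) : ContDiff ℝ ∞ (Q d) := by
  apply ContDiff.sum
  intro I _
  exact contDiff_const.mul (contDiff_prod (fun i _ => (ContinuousLinearMap.proj i :
    (Fin n → ℝ) →L[ℝ] ℝ).contDiff))

lemma hasFDerivAt_comp_eval (g : Fin n → ℝ → ℝ) (hg : ∀ k, Differentiable ℝ (g k))
    (x : Fin n → ℝ) :
    HasFDerivAt (fun y => ∑ k, g k (y k))
      (∑ k, deriv (g k) (x k) • (ContinuousLinearMap.proj k : (Fin n → ℝ) →L[ℝ] ℝ)) x := by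
  apply HasFDerivAt.fun_sum
  intro k _
  have h1 : HasDerivAt (g k) (deriv (g k) (x k)) (x k) := (hg k (x k)).hasDerivAt
  have h2 : HasFDerivAt (fun y : Fin n → ℝ => y k)
      (ContinuousLinearMap.proj k : (Fin n → ℝ) →L[ℝ] ℝ) x :=
    (ContinuousLinearMap.proj k : (Fin n → ℝ) →L[ℝ] ℝ).hasFDerivAt
  exact h1.comp_hasFDerivAt x h2

lemma eval_apply_single (c : Fin n → ℝ) (j : Fin n) :
    (∑ k, c k • (ContinuousLinearMap.proj k : (Fin n → ℝ) →L[ℝ] ℝ)) (Pi.single j 1) = c j := by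
  rw [ContinuousLinearMap.sum_apply]
  simp only [ContinuousLinearMap.smul_apply, ContinuousLinearMap.proj_apply, Pi.single_apply,
    smul_eq_mul, mul_ite, mul_one, mul_zero]
  simp

lemma pderiv_rep (c : Finset (Fin n) → ℝ) (g : Fin n → ℝ → ℝ)
    (hg : ∀ k, Differentiable ℝ (g k)) (j : Fin n) :
    pderiv' j (fun x => Q c x + ∑ k, g k (x k))
      = fun x => Q (sh j c) x + deriv (g j) (x j) := by
  funext x
  show fderiv ℝ _ x (Pi.single j 1) = _
  have h := ((hasFDerivAt_Q c x).fun_add (hasFDerivAt_comp_eval g hg x)).fderiv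
  rw [h, ContinuousLinearMap.add_apply, Qapply, eval_apply_single]

lemma pderiv_Q_add_other (d : Finset (Fin n) → ℝ) (h : ℝ → ℝ) (hh : Differentiable ℝ h)
    (i j : Fin n) (hij : i ≠ j) :
    pderiv' i (fun x => Q d x + h (x j)) = Q (sh i d) := by
  funext x
  show fderiv ℝ _ x (Pi.single i 1) = _
  have h1 : HasDerivAt h (deriv h (x j)) (x j) := (hh (x j)).hasDerivAt
  have h2 : HasFDerivAt (fun y : Fin n → ℝ => y j)
      (ContinuousLinearMap.proj j : (Fin n → ℝ) →L[ℝ] ℝ) x :=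
    (ContinuousLinearMap.proj j : (Fin n → ℝ) →L[ℝ] ℝ).hasFDerivAt
  have hj : HasFDerivAt (fun y : Fin n → ℝ => h (y j))
      (deriv h (x j) • (ContinuousLinearMap.proj j : (Fin n → ℝ) →L[ℝ] ℝ)) x :=
    h1.comp_hasFDerivAt x h2
  have hfd := ((hasFDerivAt_Q d x).fun_add hj).fderiv
  rw [hfd, ContinuousLinearMap.add_apply, Qapply]
  have : (Pi.single i 1 : Fin n → ℝ) j = 0 := by
    rw [Pi.single_apply]; simp [hij.symm]
  simp [this]

lemma g_smooth (f : (Fin n → ℝ) → ℝ) (hf : ContDiff ℝ ∞ f) (c : Finset (Fin n) → ℝ)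
    (g : Fin n → ℝ → ℝ)
    (hrep : ∀ x : Fin n → ℝ, f x = Q c x + ∑ k, g k (x k)) (k : Fin n) :
    ContDiff ℝ ∞ (g k) := by
  have hline : ContDiff ℝ ∞ (fun t : ℝ => t • (Pi.single k 1 : Fin n → ℝ)) :=
    contDiff_id.smul contDiff_const
  have hgk : g k = fun t => f (t • (Pi.single k 1 : Fin n → ℝ)) - Q c (t • (Pi.single k 1 : Fin n → ℝ))
      - ∑ m ∈ Finset.univ.erase k, g m 0 := by
    funext t
    have hx := hrep (t • (Pi.single k 1 : Fin n → ℝ))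
    have hcoord : ∀ m : Fin n, (t • (Pi.single k 1 : Fin n → ℝ)) m = if m = k then t else 0 := by
      intro m
      simp [Pi.single_apply]
    have hsum : ∑ m, g m ((t • (Pi.single k 1 : Fin n → ℝ)) m)
        = g k t + ∑ m ∈ Finset.univ.erase k, g m 0 := by
      rw [← Finset.add_sum_erase Finset.univ _ (Finset.mem_univ k)]
      congr 1
      · rw [hcoord k]; simp
      · apply Finset.sum_congr rfl
        intro m hm
        rw [hcoord m]
        simp [Finset.mem_erase.mp hm |>.1]
    rw [hsum] at hx
    ring_nf
    linarith [hx]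
  rw [hgk]
  exact ((hf.comp hline).sub ((contDiff_Q c).comp hline)).sub contDiff_const

lemma forward_dir (f : (Fin n → ℝ) → ℝ) (hf : ContDiff ℝ ∞ f) (c : Finset (Fin n) → ℝ)
    (g : Fin n → ℝ → ℝ)
    (hrep : ∀ x : Fin n → ℝ, f x = Q c x + ∑ k, g k (x k)) (i j : Fin n) (hij : i ≠ j) :
    pderiv' i (pderiv' i (pderiv' j f)) = 0 := by
  have hg : ∀ k, ContDiff ℝ ∞ (g k) := g_smooth f hf c g hrep
  have hfeq : f = fun x => Q c x + ∑ k, g k (x k) := funext hrep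
  rw [hfeq, pderiv_rep c g (fun k => (hg k).differentiable (by simp)) j]
  have hder : Differentiable ℝ (deriv (g j)) :=
    ((contDiff_infty_iff_deriv.mp (hg j)).2).differentiable (by simp)
  rw [pderiv_Q_add_other (sh j c) (deriv (g j)) hder i j hij]
  rw [pderiv_Q, sh_sh, Q_zero]
  rfl

lemma contDiff_pderiv (f : (Fin n → ℝ) → ℝ) (hf : ContDiff ℝ ∞ f) (i : Fin n) :
    ContDiff ℝ ∞ (pderiv' i f) := by
  have h1 : ContDiff ℝ ∞ (fderiv ℝ f) := hf.fderiv_right (by simp)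
  exact ((ContinuousLinearMap.apply ℝ ℝ (Pi.single i 1 : Fin n → ℝ)).contDiff).comp h1

lemma hasDerivAt_line (f : (Fin n → ℝ) → ℝ) (hf : Differentiable ℝ f) (x : Fin n → ℝ)
    (i : Fin n) (t : ℝ) :
    HasDerivAt (fun s => f (Function.update x i s)) (pderiv' i f (Function.update x i t)) t := by
  have hpath : (fun s : ℝ => Function.update x i s)
      = fun s => x + (s - x i) • (Pi.single i 1 : Fin n → ℝ) := by
    funext s
    funext m
    by_cases hm : m = i
    · subst hm; simp
    · simp [Function.update_of_ne hm, Pi.single_apply, hm]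
  have hp : HasDerivAt (fun s : ℝ => Function.update x i s) (Pi.single i 1 : Fin n → ℝ) t := by
    rw [hpath]
    have h1 : HasDerivAt (fun s : ℝ => s - x i) 1 t := (hasDerivAt_id t).sub_const (x i)
    have h2 := h1.smul_const (Pi.single i 1 : Fin n → ℝ)
    simpa using h2.const_add x
  exact (hf (Function.update x i t)).hasFDerivAt.comp_hasDerivAt t hp

lemma const_along (u : (Fin n → ℝ) → ℝ) (hu : Differentiable ℝ u) (i : Fin n)
    (h : pderiv' i u = 0) (x : Fin n → ℝ) (t : ℝ) :
    u (Function.update x i t) = u x := by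
  have hd : ∀ s : ℝ, HasDerivAt (fun s => u (Function.update x i s)) 0 s := by
    intro s
    have := hasDerivAt_line u hu x i s
    rwa [h] at this
  have hconst : ∀ a b : ℝ, u (Function.update x i a) = u (Function.update x i b) := by
    intro a b
    exact is_const_of_deriv_eq_zero (fun s => (hd s).differentiableAt)
      (fun s => (hd s).deriv) a b
  have := hconst t (x i)
  rwa [Function.update_eq_self] at this

lemma pderiv_comm (f : (Fin n → ℝ) → ℝ) (hf : ContDiff ℝ ∞ f) (i j : Fin n) :
    pderiv' i (pderiv' j f) = pderiv' j (pderiv' i f) := by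
  funext x
  have hdf : ContDiff ℝ ∞ (fderiv ℝ f) := hf.fderiv_right (by simp)
  have hdfx : HasFDerivAt (fderiv ℝ f) (fderiv ℝ (fderiv ℝ f) x) x :=
    (hdf.differentiable (by simp) x).hasFDerivAt
  have key : ∀ v w : Fin n → ℝ,
      fderiv ℝ (fun y => fderiv ℝ f y w) x v = fderiv ℝ (fderiv ℝ f) x v w := by
    intro v w
    have hc : HasFDerivAt (fun y => fderiv ℝ f y w)
        ((ContinuousLinearMap.apply ℝ ℝ w).comp (fderiv ℝ (fderiv ℝ f) x)) x :=
      (ContinuousLinearMap.apply ℝ ℝ w).hasFDerivAt.comp x hdfx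
    rw [hc.fderiv]
    rfl
  have hsymm := second_derivative_symmetric
    (fun y => (hf.differentiable (by simp) y).hasFDerivAt) hdfx
    (Pi.single i 1 : Fin n → ℝ) (Pi.single j 1 : Fin n → ℝ)
  show fderiv ℝ (fun y => fderiv ℝ f y (Pi.single j 1)) x (Pi.single i 1)
      = fderiv ℝ (fun y => fderiv ℝ f y (Pi.single i 1)) x (Pi.single j 1)
  rw [key, key, hsymm]

lemma update_eq_affine (i : Fin n) (c : ℝ) :
    (fun y : Fin n → ℝ => Function.update y i c)
      = fun y => y + (c - y i) • (Pi.single i 1 : Fin n → ℝ) := by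
  funext y m
  by_cases hm : m = i
  · subst hm; simp
  · simp [Function.update_of_ne hm, Pi.single_apply, hm]

lemma contDiff_update_comp (F : (Fin n → ℝ) → ℝ) (hF : ContDiff ℝ ∞ F) (i : Fin n) (c : ℝ) :
    ContDiff ℝ ∞ (fun x => F (Function.update x i c)) := by
  apply hF.comp
  rw [update_eq_affine]
  exact contDiff_id.add ((contDiff_const.sub
    (ContinuousLinearMap.proj i : (Fin n → ℝ) →L[ℝ] ℝ).contDiff).smul contDiff_const)

lemma hasFDerivAt_update' (i : Fin n) (c : ℝ) (x : Fin n → ℝ) :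
    HasFDerivAt (fun y : Fin n → ℝ => Function.update y i c)
      (ContinuousLinearMap.id ℝ (Fin n → ℝ)
        + ((0 : (Fin n → ℝ) →L[ℝ] ℝ) - ContinuousLinearMap.proj i).smulRight
            (Pi.single i 1 : Fin n → ℝ)) x := by
  rw [update_eq_affine]
  have h1 : HasFDerivAt (fun y : Fin n → ℝ => y i)
      (ContinuousLinearMap.proj i : (Fin n → ℝ) →L[ℝ] ℝ) x :=
    (ContinuousLinearMap.proj i : (Fin n → ℝ) →L[ℝ] ℝ).hasFDerivAt
  have h2 : HasFDerivAt (fun y : Fin n → ℝ => c - y i)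
      ((0 : (Fin n → ℝ) →L[ℝ] ℝ) - ContinuousLinearMap.proj i) x :=
    (hasFDerivAt_const c x).sub h1
  have h3 := h2.smul_const (Pi.single i 1 : Fin n → ℝ)
  exact (hasFDerivAt_id x).add h3

lemma pderiv_update (F : (Fin n → ℝ) → ℝ) (hF : Differentiable ℝ F) (i j : Fin n)
    (hij : j ≠ i) (c : ℝ) :
    pderiv' j (fun x => F (Function.update x i c))
      = fun x => pderiv' j F (Function.update x i c) := by
  funext x
  show fderiv ℝ _ x (Pi.single j 1) = _
  have hA := hasFDerivAt_update' (n := n) i c x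
  have hcomp := (hF (Function.update x i c)).hasFDerivAt.comp x hA
  have hcomp' : HasFDerivAt (fun y : Fin n → ℝ => F (Function.update y i c))
      ((fderiv ℝ F (Function.update x i c)).comp
        (ContinuousLinearMap.id ℝ (Fin n → ℝ)
          + ((0 : (Fin n → ℝ) →L[ℝ] ℝ) - ContinuousLinearMap.proj i).smulRight
              (Pi.single i 1 : Fin n → ℝ))) x := hcomp
  rw [hcomp'.fderiv]
  have hsingle : (Pi.single j 1 : Fin n → ℝ) i = 0 := by
    rw [Pi.single_apply]; simp [Ne.symm hij]
  simp [ContinuousLinearMap.comp_apply, ContinuousLinearMap.add_apply,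
    ContinuousLinearMap.smulRight_apply, ContinuousLinearMap.sub_apply, hsingle]
  rfl

lemma pderiv_sub (u v : (Fin n → ℝ) → ℝ) (hu : Differentiable ℝ u) (hv : Differentiable ℝ v)
    (i : Fin n) :
    pderiv' i (fun x => u x - v x) = fun x => pderiv' i u x - pderiv' i v x := by
  funext x
  show fderiv ℝ _ x _ = _
  rw [fderiv_fun_sub (hu x) (hv x)]
  rfl

lemma affine_of (F : (Fin n → ℝ) → ℝ) (hF : ContDiff ℝ ∞ F) (i : Fin n)
    (h : pderiv' i (pderiv' i F) = 0) (x : Fin n → ℝ) :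
    F x = F (Function.update x i 0)
      + x i * (F (Function.update x i 1) - F (Function.update x i 0)) := by
  have hF' : Differentiable ℝ F := hF.differentiable (by simp)
  have hu : Differentiable ℝ (pderiv' i F) :=
    (contDiff_pderiv F hF i).differentiable (by simp)
  set φ : ℝ → ℝ := fun s => F (Function.update x i s) with hφdef
  set ψ : ℝ → ℝ := fun s => pderiv' i F (Function.update x i s) with hψdef
  have hφ : ∀ s, HasDerivAt φ (ψ s) s := fun s => hasDerivAt_line F hF' x i s
  have hψ : ∀ s, HasDerivAt ψ 0 s := by
    intro s
    have := hasDerivAt_line (pderiv' i F) hu x i s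
    rwa [h] at this
  have hψconst : ∀ s, ψ s = ψ 0 :=
    fun s => is_const_of_deriv_eq_zero (fun a => (hψ a).differentiableAt)
      (fun a => (hψ a).deriv) s 0
  have hχ : ∀ s : ℝ, HasDerivAt (fun s => φ s - s * ψ 0) 0 s := by
    intro s
    have h1 : HasDerivAt (fun s : ℝ => s * ψ 0) (ψ 0) s := by
      simpa using (hasDerivAt_id s).mul_const (ψ 0)
    have h2 := (hφ s).sub h1
    rwa [hψconst s, sub_self] at h2
  have hχconst : ∀ s : ℝ, φ s - s * ψ 0 = φ 0 - 0 * ψ 0 :=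
    fun s => is_const_of_deriv_eq_zero (fun a => (hχ a).differentiableAt)
      (fun a => (hχ a).deriv) s 0
  have hφs : ∀ s : ℝ, φ s = φ 0 + s * ψ 0 := by
    intro s
    have := hχconst s
    ring_nf at this ⊢
    linarith
  have hψ0 : ψ 0 = φ 1 - φ 0 := by
    have := hφs 1
    linarith
  have hx : φ (x i) = F x := by rw [hφdef]; simp [Function.update_eq_self]
  rw [← hx, hφs (x i), hψ0]

def mask (s J : Finset (Fin n)) (x : Fin n → ℝ) : Fin n → ℝ :=
  fun k => if k ∈ s then (if k ∈ J then 1 else 0) else x k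

lemma pderiv_sq_update (F : (Fin n → ℝ) → ℝ) (hF : ContDiff ℝ ∞ F) (i j : Fin n)
    (hij : j ≠ i) (c : ℝ) (h : pderiv' j (pderiv' j F) = 0) :
    pderiv' j (pderiv' j (fun y => F (Function.update y i c))) = 0 := by
  have hFd : Differentiable ℝ F := hF.differentiable (by simp)
  have hud : Differentiable ℝ (pderiv' j F) :=
    (contDiff_pderiv F hF j).differentiable (by simp)
  rw [pderiv_update F hFd i j hij c, pderiv_update (pderiv' j F) hud i j hij c]
  funext y
  rw [h]
  rfl

lemma rep_lemma (s : Finset (Fin n)) :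
    ∀ F : (Fin n → ℝ) → ℝ, ContDiff ℝ ∞ F →
      (∀ i ∈ s, pderiv' i (pderiv' i F) = 0) → ∀ x,
      F x = ∑ I ∈ s.powerset, (∏ k ∈ I, x k) *
        ∑ J ∈ I.powerset, (-1:ℝ)^(I.card - J.card) * F (mask s J x) := by
  induction s using Finset.induction_on with
  | empty =>
      intro F hF h x
      have : mask (∅ : Finset (Fin n)) ∅ x = x := by funext k; simp [mask]
      simp [this]
  | @insert i s' hi IH =>
      intro F hF h x
      have hFd : Differentiable ℝ F := hF.differentiable (by simp)
      set F0 : (Fin n → ℝ) → ℝ := fun y => F (Function.update y i 0) with hF0def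
      set F1 : (Fin n → ℝ) → ℝ := fun y => F (Function.update y i 1) with hF1def
      have hF0 : ContDiff ℝ ∞ F0 := contDiff_update_comp F hF i 0
      have hF1 : ContDiff ℝ ∞ F1 := contDiff_update_comp F hF i 1
      have haff : ∀ y, F y = F0 y + y i * (F1 y - F0 y) :=
        affine_of F hF i (h i (Finset.mem_insert_self i s'))
      have hne : ∀ j ∈ s', j ≠ i := fun j hj e => hi (e ▸ hj)
      have hd0 : ∀ j ∈ s', pderiv' j (pderiv' j F0) = 0 := fun j hj =>
        pderiv_sq_update F hF i j (hne j hj) 0 (h j (Finset.mem_insert_of_mem hj))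
      have hd1 : ∀ j ∈ s', pderiv' j (pderiv' j F1) = 0 := fun j hj =>
        pderiv_sq_update F hF i j (hne j hj) 1 (h j (Finset.mem_insert_of_mem hj))
      set G : (Fin n → ℝ) → ℝ := fun y => F1 y - F0 y with hGdef
      have hG : ContDiff ℝ ∞ G := hF1.sub hF0
      have hdG : ∀ j ∈ s', pderiv' j (pderiv' j G) = 0 := by
        intro j hj
        rw [hGdef, pderiv_sub F1 F0 (hF1.differentiable (by simp))
          (hF0.differentiable (by simp)) j,
          pderiv_sub (pderiv' j F1) (pderiv' j F0)
            ((contDiff_pderiv F1 hF1 j).differentiable (by simp))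
            ((contDiff_pderiv F0 hF0 j).differentiable (by simp)) j,
          hd0 j hj, hd1 j hj]
        funext y
        simp
      have hIH0 := IH F0 hF0 hd0 x
      have hIHG := IH G hG hdG x
      -- mask facts
      have hmask0 : ∀ J ∈ s'.powerset,
          mask (insert i s') J x = Function.update (mask s' J x) i 0 := by
        intro J hJ
        have hiJ : i ∉ J := fun hiJ => hi (Finset.mem_powerset.mp hJ hiJ)
        funext k
        by_cases hk : k = i
        · subst hk; simp [mask, hiJ]
        · simp [mask, Function.update_of_ne hk, Finset.mem_insert, hk]
      have hmask1 : ∀ J ∈ s'.powerset,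
          mask (insert i s') (insert i J) x = Function.update (mask s' J x) i 1 := by
        intro J hJ
        funext k
        by_cases hk : k = i
        · subst hk; simp [mask]
        · simp [mask, Function.update_of_ne hk, Finset.mem_insert, hk]
      rw [Finset.sum_powerset_insert hi]
      -- first sum equals F0 x
      have hfirst : ∑ I ∈ s'.powerset, (∏ k ∈ I, x k) *
          ∑ J ∈ I.powerset, (-1:ℝ)^(I.card - J.card) * F (mask (insert i s') J x)
          = F0 x := by
        rw [hIH0]
        apply Finset.sum_congr rfl
        intro I hI
        congr 1
        apply Finset.sum_congr rfl
        intro J hJ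
        have hJs' : J ∈ s'.powerset := Finset.mem_powerset.mpr
          ((Finset.mem_powerset.mp hJ).trans (Finset.mem_powerset.mp hI))
        rw [hmask0 J hJs']
      -- second sum equals x i * G x
      have hsecond : ∑ I ∈ s'.powerset, (∏ k ∈ insert i I, x k) *
          ∑ J ∈ (insert i I).powerset,
            (-1:ℝ)^((insert i I).card - J.card) * F (mask (insert i s') J x)
          = x i * G x := by
        rw [hIHG, Finset.mul_sum]
        apply Finset.sum_congr rfl
        intro I hI
        have hiI : i ∉ I := fun hiI => hi (Finset.mem_powerset.mp hI hiI)
        have hcardI : (insert i I).card = I.card + 1 := Finset.card_insert_of_notMem hiI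
        rw [Finset.prod_insert hiI, Finset.sum_powerset_insert hiI]
        have hinner : ∀ J ∈ I.powerset,
            ((-1:ℝ)^((insert i I).card - J.card) * F (mask (insert i s') J x)
            + (-1:ℝ)^((insert i I).card - (insert i J).card)
                * F (mask (insert i s') (insert i J) x))
            = (-1:ℝ)^(I.card - J.card) * G (mask s' J x) := by
          intro J hJ
          have hJI : J ⊆ I := Finset.mem_powerset.mp hJ
          have hiJ : i ∉ J := fun hiJ => hiI (hJI hiJ)
          have hJs' : J ∈ s'.powerset := Finset.mem_powerset.mpr
            (hJI.trans (Finset.mem_powerset.mp hI))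
          have hcardJ : (insert i J).card = J.card + 1 := Finset.card_insert_of_notMem hiJ
          have hcard_le : J.card ≤ I.card := Finset.card_le_card hJI
          rw [hmask0 J hJs', hmask1 J hJs', hcardI, hcardJ]
          have e1 : I.card + 1 - J.card = (I.card - J.card) + 1 := by omega
          have e2 : I.card + 1 - (J.card + 1) = I.card - J.card := by omega
          rw [e1, e2, pow_succ]
          show _ * F0 (mask s' J x) + _ * F1 (mask s' J x) = _ * G (mask s' J x)
          rw [hGdef]
          ring
        calc (x i * ∏ k ∈ I, x k) *
              (∑ J ∈ I.powerset, (-1:ℝ)^((insert i I).card - J.card)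
                  * F (mask (insert i s') J x)
                + ∑ J ∈ I.powerset, (-1:ℝ)^((insert i I).card - (insert i J).card)
                  * F (mask (insert i s') (insert i J) x))
            = (x i * ∏ k ∈ I, x k) *
              ∑ J ∈ I.powerset, (-1:ℝ)^(I.card - J.card) * G (mask s' J x) := by
              rw [← Finset.sum_add_distrib]
              rw [Finset.sum_congr rfl hinner]
          _ = x i * ((∏ k ∈ I, x k) *
              ∑ J ∈ I.powerset, (-1:ℝ)^(I.card - J.card) * G (mask s' J x)) := by ring
      rw [hfirst, hsecond, haff x, hGdef]

lemma eq_on_line (u : (Fin n → ℝ) → ℝ) (hu : Differentiable ℝ u) (i : Fin n)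
    (h : ∀ j, j ≠ i → pderiv' j u = 0) (x : Fin n → ℝ) :
    u x = u (Pi.single i (x i)) := by
  have aux : ∀ s : Finset (Fin n), i ∉ s → u x = u (fun k => if k ∈ s then 0 else x k) := by
    intro s
    induction s using Finset.induction_on with
    | empty =>
        intro _
        have : (fun k => if k ∈ (∅ : Finset (Fin n)) then 0 else x k) = x := by
          funext k; simp
        rw [this]
    | @insert j s' hj IHs =>
        intro hins
        have hij : j ≠ i := by rintro rfl; exact hins (Finset.mem_insert_self j s')
        have his' : i ∉ s' := fun hs => hins (Finset.mem_insert_of_mem hs)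
        have h1 := IHs his'
        have h2 : u (Function.update (fun k => if k ∈ s' then 0 else x k) j 0)
            = u (fun k => if k ∈ s' then 0 else x k) :=
          const_along u hu j (h j hij) _ 0
        have h3 : Function.update (fun k => if k ∈ s' then 0 else x k) j 0
            = fun k => if k ∈ insert j s' then 0 else x k := by
          funext k
          by_cases hk : k = j
          · subst hk; simp
          · simp [Function.update_of_ne hk, Finset.mem_insert, hk]
        rw [h1, ← h2, h3]
  have h4 := aux (Finset.univ.erase i) (by simp)
  have hfin : (fun k => if k ∈ Finset.univ.erase i then 0 else x k)
      = (Pi.single i (x i) : Fin n → ℝ) := by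
    funext k
    by_cases hk : k = i
    · subst hk; simp
    · simp [Finset.mem_erase, hk, Pi.single_apply]
  rw [h4, hfin]

lemma double_primitive (φ : ℝ → ℝ) (hφ : ContDiff ℝ ∞ φ) :
    ∃ g : ℝ → ℝ, ContDiff ℝ ∞ g ∧ deriv (deriv g) = φ := by
  set G1 : ℝ → ℝ := fun t => ∫ s in (0:ℝ)..t, φ s with hG1def
  have hG1d : ∀ t, HasDerivAt G1 (φ t) t := fun t =>
    ((hφ.continuous).integral_hasStrictDerivAt 0 t).hasDerivAt
  have hG1 : ContDiff ℝ ∞ G1 := by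
    rw [contDiff_infty_iff_deriv]
    refine ⟨fun t => (hG1d t).differentiableAt, ?_⟩
    have hd : deriv G1 = φ := funext fun t => (hG1d t).deriv
    rw [hd]; exact hφ
  have hG1c : Continuous G1 := hG1.continuous
  set g : ℝ → ℝ := fun t => ∫ s in (0:ℝ)..t, G1 s with hgdef
  have hgd : ∀ t, HasDerivAt g (G1 t) t := fun t =>
    (hG1c.integral_hasStrictDerivAt 0 t).hasDerivAt
  have hgderiv : deriv g = G1 := funext fun t => (hgd t).deriv
  have hg : ContDiff ℝ ∞ g := by
    rw [contDiff_infty_iff_deriv]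
    exact ⟨fun t => (hgd t).differentiableAt, by rw [hgderiv]; exact hG1⟩
  exact ⟨g, hg, by rw [hgderiv]; exact funext fun t => (hG1d t).deriv⟩

lemma pderiv_sub_sum (u : (Fin n → ℝ) → ℝ) (hu : Differentiable ℝ u) (g : Fin n → ℝ → ℝ)
    (hg : ∀ k, Differentiable ℝ (g k)) (i : Fin n) :
    pderiv' i (fun x => u x - ∑ k, g k (x k))
      = fun x => pderiv' i u x - deriv (g i) (x i) := by
  funext x
  show fderiv ℝ _ x _ = _
  have hs := hasFDerivAt_comp_eval g hg x
  have h4 := ((hu x).hasFDerivAt.fun_sub hs).fderiv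
  rw [h4, ContinuousLinearMap.sub_apply, eval_apply_single]
  rfl

lemma pderiv_sub_eval (u : (Fin n → ℝ) → ℝ) (hu : Differentiable ℝ u) (h : ℝ → ℝ)
    (hh : Differentiable ℝ h) (i : Fin n) :
    pderiv' i (fun x => u x - h (x i)) = fun x => pderiv' i u x - deriv h (x i) := by
  funext x
  show fderiv ℝ _ x _ = _
  have h1 : HasDerivAt h (deriv h (x i)) (x i) := (hh (x i)).hasDerivAt
  have h2 : HasFDerivAt (fun y : Fin n → ℝ => y i)
      (ContinuousLinearMap.proj i : (Fin n → ℝ) →L[ℝ] ℝ) x :=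
    (ContinuousLinearMap.proj i : (Fin n → ℝ) →L[ℝ] ℝ).hasFDerivAt
  have h3 : HasFDerivAt (fun y : Fin n → ℝ => h (y i))
      (deriv h (x i) • (ContinuousLinearMap.proj i : (Fin n → ℝ) →L[ℝ] ℝ)) x :=
    h1.comp_hasFDerivAt x h2
  have h4 := ((hu x).hasFDerivAt.fun_sub h3).fderiv
  rw [h4, ContinuousLinearMap.sub_apply, ContinuousLinearMap.smul_apply]
  have h5 : (Pi.single i 1 : Fin n → ℝ) i = 1 := by simp
  simp [h5]
  rfl

lemma reverse_dir (f : (Fin n → ℝ) → ℝ) (hf : ContDiff ℝ ∞ f)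
    (H : ∀ i j : Fin n, i ≠ j → pderiv' i (pderiv' i (pderiv' j f)) = 0) :
    ∃ (c : Finset (Fin n) → ℝ) (g : Fin n → ℝ → ℝ),
      ∀ x : Fin n → ℝ,
        f x = (∑ I : Finset (Fin n), c I * ∏ k ∈ I, x k) + ∑ k, g k (x k) := by
  have hsm1 : ∀ i, ContDiff ℝ ∞ (pderiv' i f) := contDiff_pderiv f hf
  have hsm2 : ∀ i, ContDiff ℝ ∞ (pderiv' i (pderiv' i f)) :=
    fun i => contDiff_pderiv _ (hsm1 i) i
  have hzero : ∀ i j, j ≠ i → pderiv' j (pderiv' i (pderiv' i f)) = 0 := by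
    intro i j hji
    have c1 : pderiv' j (pderiv' i (pderiv' i f)) = pderiv' i (pderiv' j (pderiv' i f)) :=
      pderiv_comm (pderiv' i f) (hsm1 i) j i
    have c2 : pderiv' j (pderiv' i f) = pderiv' i (pderiv' j f) := pderiv_comm f hf j i
    rw [c1, c2]
    exact H i j (Ne.symm hji)
  set φ : Fin n → ℝ → ℝ := fun i t => pderiv' i (pderiv' i f) (Pi.single i t) with hφdef
  have hφsm : ∀ i, ContDiff ℝ ∞ (φ i) := by
    intro i
    have hl : ContDiff ℝ ∞ (fun t : ℝ => (Pi.single i t : Fin n → ℝ)) := by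
      have hl2 : (fun t : ℝ => (Pi.single i t : Fin n → ℝ))
          = fun t => t • (Pi.single i 1 : Fin n → ℝ) := by
        funext t k
        by_cases hk : k = i
        · subst hk; simp
        · simp [Pi.single_apply, hk]
      rw [hl2]
      exact contDiff_id.smul contDiff_const
    exact (hsm2 i).comp hl
  have hline : ∀ i x, pderiv' i (pderiv' i f) x = φ i (x i) := by
    intro i x
    exact eq_on_line (pderiv' i (pderiv' i f)) ((hsm2 i).differentiable (by simp)) i
      (fun j hj => hzero i j hj) x
  choose gfun hgsm hgpp using fun i => double_primitive (φ i) (hφsm i)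
  have hgdiff : ∀ k, Differentiable ℝ (gfun k) := fun k => (hgsm k).differentiable (by simp)
  have hgderivdiff : ∀ k, Differentiable ℝ (deriv (gfun k)) :=
    fun k => ((contDiff_infty_iff_deriv.mp (hgsm k)).2).differentiable (by simp)
  have hsum_sm : ContDiff ℝ ∞ (fun x : Fin n → ℝ => ∑ k, gfun k (x k)) := by
    apply ContDiff.sum
    intro k _
    exact (hgsm k).comp (ContinuousLinearMap.proj k : (Fin n → ℝ) →L[ℝ] ℝ).contDiff
  set F : (Fin n → ℝ) → ℝ := fun x => f x - ∑ k, gfun k (x k) with hFdef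
  have hFsm : ContDiff ℝ ∞ F := by
    rw [hFdef]; exact hf.sub hsum_sm
  have hFd2 : ∀ i, pderiv' i (pderiv' i F) = 0 := by
    intro i
    rw [hFdef]
    rw [pderiv_sub_sum f (hf.differentiable (by simp)) gfun hgdiff i]
    rw [pderiv_sub_eval (pderiv' i f) ((hsm1 i).differentiable (by simp))
      (deriv (gfun i)) (hgderivdiff i) i]
    funext x
    rw [hgpp i]
    show pderiv' i (pderiv' i f) x - φ i (x i) = 0
    rw [hline i x, sub_self]
  have hrep := rep_lemma Finset.univ F hFsm (fun i _ => hFd2 i)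
  have hmaskuniv : ∀ (J : Finset (Fin n)) (x : Fin n → ℝ),
      mask Finset.univ J x = fun k => if k ∈ J then (1:ℝ) else 0 := by
    intro J x
    funext k
    simp [mask]
  refine ⟨fun I => ∑ J ∈ I.powerset, (-1:ℝ)^(I.card - J.card)
    * F (fun k => if k ∈ J then 1 else 0), gfun, ?_⟩
  intro x
  have h2 : f x = F x + ∑ k, gfun k (x k) := by rw [hFdef]; ring
  rw [h2, hrep x,
    show (Finset.univ : Finset (Finset (Fin n))) = Finset.univ.powerset from
      Finset.powerset_univ.symm]
  congr 1
  apply Finset.sum_congr rfl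
  intro I _
  rw [mul_comm]
  congr 1
  apply Finset.sum_congr rfl
  intro J _
  rw [hmaskuniv]

theorem multilinear_plus_addsep_iff_third_partials_vanish {n : ℕ}
    (f : (Fin n → ℝ) → ℝ) (hf : ContDiff ℝ (⊤ : ℕ∞) f) :
    (∃ (c : Finset (Fin n) → ℝ) (g : Fin n → ℝ → ℝ),
        ∀ x : Fin n → ℝ,
          f x = (∑ I : Finset (Fin n), c I * ∏ i ∈ I, x i) + ∑ i : Fin n, g i (x i)) ↔
      (∀ i j : Fin n, i ≠ j → pderiv' i (pderiv' i (pderiv' j f)) = 0) := by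
  constructor
  · rintro ⟨c, g, hrep⟩ i j hij
    exact forward_dir f (hf.of_le (by simp)) c g hrep i j hij
  · intro H
    obtain ⟨c, g, hrep⟩ := reverse_dir f (hf.of_le (by simp)) H
    exact ⟨c, g, hrep⟩
end

section
/- Let $f(r) = r_1 r_2 \cdots r_n$ and fix $r, s \in \mathbb{R}^n$. For each index $i$, the Aumann-Shapley attribution $z_i^{AS}(r,s) = \int_0^1 \partial_i f(r + t(s-r)) \,(s_i - r_i)\, dt$ equals $\frac{s_i - r_i}{n!} \sum_{J \subseteq [n] \setminus \{i\}} |J|!\,(n-1-|J|)! \prod_{j \in J} s_j \prod_{j \in [n]\setminus\{i\}\setminus J} r_j$. -/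
/-!
Writing each factor as `t * s j + (1 - t) * r j` and expanding the product turns the integrand
into a sum over subsets `J` of `t ^ |J| * (1 - t) ^ (n - 1 - |J|)` times a monomial, and each
such Beta integral equals `|J|! (n - 1 - |J|)! / n!`.
-/

open Finset Nat

theorem integral_pow_mul_one_sub_pow (a b : ℕ) :
    ∫ t in (0:ℝ)..1, t ^ a * (1 - t) ^ b = (a ! * b ! : ℝ) / (a + b + 1)! := by
  have hβ := Complex.betaIntegral_eq_Gamma_mul_div (a + 1) (b + 1)
    (by norm_cast; omega) (by norm_cast; omega)
  rw [Complex.betaIntegral] at hβ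
  simp only [add_sub_cancel_right, Complex.cpow_natCast] at hβ
  rw [← Complex.ofReal_inj]
  push_cast
  rw [← intervalIntegral.integral_ofReal]
  push_cast
  convert hβ using 1
  rw [show (a + 1 + (b + 1) : ℂ) = ((a + b + 1 : ℕ) : ℂ) + 1 by push_cast; ring]
  simp only [Complex.Gamma_nat_eq_factorial]

variable {ι : Type*} [DecidableEq ι]

theorem prod_add_mul_sub_eq_sum_powerset {R : Type*} [CommRing R] (E : Finset ι) (r s : ι → R)
    (t : R) :
    ∏ j ∈ E, (r j + t * (s j - r j)) =
      ∑ J ∈ E.powerset, t ^ #J * (1 - t) ^ (#E - #J) * ((∏ j ∈ J, s j) * ∏ j ∈ E \ J, r j) := by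
  have hconvex : ∀ j, r j + t * (s j - r j) = t * s j + (1 - t) * r j := fun j ↦ by ring
  simp only [hconvex, prod_add]
  refine sum_congr rfl fun J hJ ↦ ?_
  rw [prod_mul_distrib, prod_mul_distrib, prod_const, prod_const,
    card_sdiff_of_subset (mem_powerset.mp hJ)]
  ring

theorem integral_prod_add_mul_sub (E : Finset ι) (r s : ι → ℝ) :
    ∫ t in (0:ℝ)..1, ∏ j ∈ E, (r j + t * (s j - r j)) =
      ∑ J ∈ E.powerset, ((#J)! * (#E - #J)! : ℝ) / (#E + 1)! *
        ((∏ j ∈ J, s j) * ∏ j ∈ E \ J, r j) := by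
  simp_rw [prod_add_mul_sub_eq_sum_powerset]
  rw [intervalIntegral.integral_finsetSum fun J _ ↦ by
    apply Continuous.intervalIntegrable; fun_prop]
  refine sum_congr rfl fun J hJ ↦ ?_
  have hcard : #J + (#E - #J) = #E := Nat.add_sub_cancel' (card_le_card (mem_powerset.mp hJ))
  rw [intervalIntegral.integral_mul_const, integral_pow_mul_one_sub_pow, hcard]

open Finset in
theorem aumannShapley_eq_shapleyShubik_for_product {n : ℕ}
    (r s : Fin n → ℝ) (i : Fin n) :
    (∫ t in (0:ℝ)..1,
        (s i - r i) * ∏ j ∈ Finset.univ.erase i, (r j + t * (s j - r j))) =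
      (s i - r i) / (Nat.factorial n : ℝ) *
        ∑ J ∈ (Finset.univ.erase i).powerset,
          (Nat.factorial J.card * Nat.factorial (n - 1 - J.card) : ℝ) *
            (∏ j ∈ J, s j) * ∏ j ∈ (Finset.univ.erase i) \ J, r j := by
  have hcard : #(univ.erase i) = n - 1 := by simp
  rw [intervalIntegral.integral_const_mul, integral_prod_add_mul_sub, hcard,
    Nat.sub_add_cancel i.pos, mul_sum, mul_sum]
  refine sum_congr rfl fun J _ ↦ ?_
  ring
end

section
/- Let $z$ be an attribution method on additively separable functions (i.e., for each such $f$ and each pair $r,s \in \mathbb{R}^n$, a vector $(z_1,\ldots,z_n)$ with $\sum_i z_i(r,s,f) = f(s) - f(r)$). If $z$ satisfies Additivity ($z_i(r,s,f+g) = z_i(r,s,f) + z_i(r,s,g)$) and Dummy (if $f$ does not depend on variable $i$, then $z_i(r,s,f) = 0$), then necessarily $z_i(r,s,f) = f_i(s_i) - f_i(r_i)$ where $f(x) = \sum_j f_j(x_j)$. -/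
/-- `f` is additively separable. -/
def AddSep {n : ℕ} (f : (Fin n → ℝ) → ℝ) : Prop :=
  ∃ g : Fin n → ℝ → ℝ, ∀ x : Fin n → ℝ, f x = ∑ j : Fin n, g j (x j)

lemma addSep_zero {n : ℕ} : AddSep (0 : (Fin n → ℝ) → ℝ) :=
  ⟨fun _ _ => 0, fun x => by simp⟩

lemma addSep_add {n : ℕ} {f g : (Fin n → ℝ) → ℝ} (hf : AddSep f) (hg : AddSep g) :
    AddSep (f + g) := by
  obtain ⟨F, hF⟩ := hf; obtain ⟨G, hG⟩ := hg
  exact ⟨fun j t => F j t + G j t, fun x => by simp [hF, hG, Finset.sum_add_distrib]⟩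

lemma addSep_single {n : ℕ} (g : Fin n → ℝ → ℝ) (j : Fin n) :
    AddSep (fun x : Fin n → ℝ => g j (x j)) := by
  refine ⟨fun k t => if k = j then g j t else 0, fun x => ?_⟩
  simp

lemma addSep_sum {n : ℕ} {ι : Type*} (F : ι → (Fin n → ℝ) → ℝ)
    (hF : ∀ j, AddSep (F j)) (T : Finset ι) : AddSep (∑ j ∈ T, F j) := by
  induction T using Finset.cons_induction with
  | empty => simpa using addSep_zero
  | cons a T ha ih => rw [Finset.sum_cons]; exact addSep_add (hF a) ih

theorem unique_attribution_on_addsep {n : ℕ}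
    (z : (Fin n → ℝ) → (Fin n → ℝ) → ((Fin n → ℝ) → ℝ) → Fin n → ℝ)
    (hcomp : ∀ r s f, AddSep f → ∑ i : Fin n, z r s f i = f s - f r)
    (hadd : ∀ r s f g, AddSep f → AddSep g →
      ∀ i, z r s (f + g) i = z r s f i + z r s g i)
    (hdummy : ∀ r s f (i : Fin n), AddSep f →
      (∀ (x : Fin n → ℝ) (t : ℝ), f (Function.update x i t) = f x) →
      z r s f i = 0) :
    ∀ (r s : Fin n → ℝ) (f : (Fin n → ℝ) → ℝ) (g : Fin n → ℝ → ℝ),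
      (∀ x : Fin n → ℝ, f x = ∑ j : Fin n, g j (x j)) →
      ∀ i, z r s f i = g i (s i) - g i (r i) := by
  intro r s f g hfg i
  set F : Fin n → (Fin n → ℝ) → ℝ := fun j x => g j (x j) with hFdef
  have hFsep : ∀ j, AddSep (F j) := fun j => addSep_single g j
  have hz0 : ∀ k, z r s 0 k = 0 := by
    intro k
    have := hadd r s 0 0 addSep_zero addSep_zero k
    simp at this
    linarith
  -- dummy: z r s (F j) k = 0 when j ≠ k
  have hdum : ∀ j k, j ≠ k → z r s (F j) k = 0 := by
    intro j k hjk
    refine hdummy r s (F j) k (hFsep j) ?_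
    intro x t
    simp [hFdef, Function.update_of_ne hjk]
  -- additivity over finite sums
  have hsum : ∀ (T : Finset (Fin n)),
      ∀ k, z r s (∑ j ∈ T, F j) k = ∑ j ∈ T, z r s (F j) k := by
    intro T
    induction T using Finset.cons_induction with
    | empty => simpa using hz0
    | cons a T ha ih =>
      intro k
      rw [Finset.sum_cons, hadd r s (F a) (∑ j ∈ T, F j) (hFsep a)
        (addSep_sum F hFsep T) k, ih k, Finset.sum_cons]
  have hfF : f = ∑ j : Fin n, F j := by
    funext x; simpa using hfg x
  have h1 : z r s f i = z r s (F i) i := by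
    rw [hfF, hsum Finset.univ i]
    rw [Finset.sum_eq_single i (fun j _ hj => hdum j i hj) (by simp)]
  have h2 : ∑ k : Fin n, z r s (F i) k = g i (s i) - g i (r i) :=
    hcomp r s (F i) (hFsep i)
  rw [Finset.sum_eq_single i (fun k _ hk => hdum i k (Ne.symm hk)) (by simp)] at h2
  rw [h1, h2]
end

section
/- Suppose $f : \mathbb{R}^2 \to \mathbb{R}$ is $C^2$ and for all $r \le s$ in $\mathbb{R}^2$, the Aumann-Shapley attribution to the second variable along the diagonal path equals the Shapley-Shubik attribution: $\int_0^1 \partial_2 f((1-t)r + ts)(s_2 - r_2)\,dt = \frac{1}{2}[f(s_1,s_2) - f(s_1,r_2)] + \frac{1}{2}[f(r_1,s_2) - f(r_1,r_2)]$. Then $\partial_1\partial_2 f$ is constant, i.e., $f(x_1, x_2) = c\, x_1 x_2 + g_1(x_1) + g_2(x_2)$ for some constant $c$ and functions $g_1, g_2$. -/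
/-!
Write `H = ∂₁∂₂f`. The mixed second difference of `f` over the rectangle `[a, a + w] × [c, c + v]`
is `w v` times the average of `H` over that rectangle. The Aumann–Shapley attribution is additive
along the diagonal, so the hypothesis, applied to a rectangle and to its two diagonal half-size
cells, forces its two off-diagonal cells to have equal mixed differences. Sliding along the
anti-diagonal, any two cells of size `(w, v)` whose corners differ by a multiple of `(w, -v)` have
equal mixed differences; letting the cells shrink, `H` agrees at any two points in strict
south-east position, hence is constant, and integrating twice gives the form of `f`.
-/

open intervalIntegral Filter Topology

theorem sub_eq_mul_integral_fderiv_apply {E : Type*} [NormedAddCommGroup E] [NormedSpace ℝ E]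
    {g : E → ℝ} (hg : ContDiff ℝ 1 g) (x e : E) (v : ℝ) :
    g (x + v • e) - g x = v * ∫ t in (0:ℝ)..1, fderiv ℝ g (x + (t * v) • e) e := by
  rw [sub_eq_iff_eq_add']
  simpa [smul_smul] using map_add_eq_sum_add_integral_iteratedFDeriv (n := 0) (x := x)
    (y := v • e) (fun t _ => hg.contDiffAt)

noncomputable def partialSnd (f : ℝ × ℝ → ℝ) (p : ℝ × ℝ) : ℝ := fderiv ℝ f p (0, 1)

noncomputable def mixedPartial (f : ℝ × ℝ → ℝ) (p : ℝ × ℝ) : ℝ :=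
  fderiv ℝ (partialSnd f) p (1, 0)

def rectDiff (f : ℝ × ℝ → ℝ) (a c w v : ℝ) : ℝ :=
  f (a + w, c + v) - f (a + w, c) - f (a, c + v) + f (a, c)

-- Parametrised over the unit square, so that it stays continuous as `w, v → 0`.
noncomputable def rectAverage (g : ℝ × ℝ → ℝ) (a c w v : ℝ) : ℝ :=
  ∫ t in (0:ℝ)..1, ∫ s in (0:ℝ)..1, g (a + s * w, c + t * v)

noncomputable def aumannShapleySnd (f : ℝ × ℝ → ℝ) (r1 r2 s1 s2 : ℝ) : ℝ :=
  ∫ t in (0:ℝ)..1,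
    deriv (fun y => f ((1 - t) * r1 + t * s1, y)) ((1 - t) * r2 + t * s2) * (s2 - r2)

noncomputable def shapleyShubikSnd (f : ℝ × ℝ → ℝ) (r1 r2 s1 s2 : ℝ) : ℝ :=
  (f (s1, s2) - f (s1, r2)) / 2 + (f (r1, s2) - f (r1, r2)) / 2

def AumannShapleyEqShapleyShubik (f : ℝ × ℝ → ℝ) : Prop :=
  ∀ r1 r2 s1 s2 : ℝ, r1 ≤ s1 → r2 ≤ s2 →
    aumannShapleySnd f r1 r2 s1 s2 = shapleyShubikSnd f r1 r2 s1 s2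

section

variable {f : ℝ × ℝ → ℝ}

theorem contDiff_partialSnd {n : ℕ∞} (hf : ContDiff ℝ (n + 1) f) : ContDiff ℝ n (partialSnd f) :=
  (hf.fderiv_right le_rfl).clm_apply contDiff_const

theorem continuous_partialSnd (hf : ContDiff ℝ 1 f) : Continuous (partialSnd f) :=
  (contDiff_partialSnd (n := 0) hf).continuous

theorem continuous_mixedPartial (hf : ContDiff ℝ 2 f) : Continuous (mixedPartial f) :=
  ((contDiff_partialSnd (n := 1) hf).continuous_fderiv one_ne_zero).clm_apply continuous_const

theorem deriv_snd_eq_partialSnd {x y : ℝ} (hf : DifferentiableAt ℝ f (x, y)) :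
    deriv (fun y => f (x, y)) y = partialSnd f (x, y) :=
  (hf.hasFDerivAt.comp_hasDerivAt y ((hasDerivAt_const y x).prodMk (hasDerivAt_id y))).deriv

theorem sub_snd_eq_mul_integral_partialSnd (hf : ContDiff ℝ 1 f) (x c v : ℝ) :
    f (x, c + v) - f (x, c) = v * ∫ t in (0:ℝ)..1, partialSnd f (x, c + t * v) := by
  simpa [partialSnd] using sub_eq_mul_integral_fderiv_apply hf (x, c) (0, 1) v

theorem partialSnd_sub_fst_eq_mul_integral_mixedPartial (hf : ContDiff ℝ 2 f) (a w y : ℝ) :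
    partialSnd f (a + w, y) - partialSnd f (a, y) =
      w * ∫ s in (0:ℝ)..1, mixedPartial f (a + s * w, y) := by
  simpa [mixedPartial] using
    sub_eq_mul_integral_fderiv_apply (contDiff_partialSnd (n := 1) hf) (a, y) (1, 0) w

theorem rectDiff_eq_mul_rectAverage (hf : ContDiff ℝ 2 f) (a c w v : ℝ) :
    rectDiff f a c w v = w * v * rectAverage (mixedPartial f) a c w v := by
  have hf1 : ContDiff ℝ 1 f := hf.of_le one_le_two
  have hcont := continuous_partialSnd hf1
  calc rectDiff f a c w v
      = (f (a + w, c + v) - f (a + w, c)) - (f (a, c + v) - f (a, c)) := by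
        unfold rectDiff; ring
    _ = v * ∫ t in (0:ℝ)..1, (partialSnd f (a + w, c + t * v) - partialSnd f (a, c + t * v)) := by
        rw [sub_snd_eq_mul_integral_partialSnd hf1, sub_snd_eq_mul_integral_partialSnd hf1,
          integral_sub (by apply Continuous.intervalIntegrable; fun_prop)
            (by apply Continuous.intervalIntegrable; fun_prop), mul_sub]
    _ = w * v * rectAverage (mixedPartial f) a c w v := by
        simp only [partialSnd_sub_fst_eq_mul_integral_mixedPartial hf, integral_const_mul,
          rectAverage]
        ring

theorem continuous_rectAverage {g : ℝ × ℝ → ℝ} (hg : Continuous g) (a c : ℝ) :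
    Continuous fun q : ℝ × ℝ => rectAverage g a c q.1 q.2 := by
  unfold rectAverage
  fun_prop

theorem rectAverage_zero (g : ℝ × ℝ → ℝ) (a c : ℝ) : rectAverage g a c 0 0 = g (a, c) := by
  simp [rectAverage]

theorem aumannShapleySnd_add (hf : ContDiff ℝ 1 f) (r1 r2 s1 s2 l : ℝ) :
    aumannShapleySnd f r1 r2 s1 s2 =
      aumannShapleySnd f r1 r2 ((1 - l) * r1 + l * s1) ((1 - l) * r2 + l * s2) +
        aumannShapleySnd f ((1 - l) * r1 + l * s1) ((1 - l) * r2 + l * s2) s1 s2 := by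
  set G : ℝ → ℝ := fun t =>
    deriv (fun y => f ((1 - t) * r1 + t * s1, y)) ((1 - t) * r2 + t * s2) * (s2 - r2)
  have hG : Continuous G := by
    have hcont := continuous_partialSnd hf
    have hdiff := hf.differentiable one_ne_zero
    simp only [G, deriv_snd_eq_partialSnd (hdiff _)]
    fun_prop
  have hfirst : aumannShapleySnd f r1 r2 ((1 - l) * r1 + l * s1) ((1 - l) * r2 + l * s2) =
      ∫ t in (0:ℝ)..l, G t := by
    calc _ = l * ∫ t in (0:ℝ)..1, G (l * t) := by
          rw [aumannShapleySnd, ← integral_const_mul]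
          refine integral_congr fun t _ => ?_
          simp only [G]
          rw [show (1 - t) * r1 + t * ((1 - l) * r1 + l * s1) = (1 - l * t) * r1 + l * t * s1 by
              ring,
            show (1 - t) * r2 + t * ((1 - l) * r2 + l * s2) = (1 - l * t) * r2 + l * t * s2 by
              ring]
          ring
      _ = ∫ t in (0:ℝ)..l, G t := by simp [mul_integral_comp_mul_left]
  have hsecond : aumannShapleySnd f ((1 - l) * r1 + l * s1) ((1 - l) * r2 + l * s2) s1 s2 =
      ∫ t in l..1, G t := by
    calc _ = (1 - l) * ∫ t in (0:ℝ)..1, G ((1 - l) * t + l) := by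
          rw [aumannShapleySnd, ← integral_const_mul]
          refine integral_congr fun t _ => ?_
          simp only [G]
          rw [show (1 - t) * ((1 - l) * r1 + l * s1) + t * s1
              = (1 - ((1 - l) * t + l)) * r1 + ((1 - l) * t + l) * s1 by ring,
            show (1 - t) * ((1 - l) * r2 + l * s2) + t * s2
              = (1 - ((1 - l) * t + l)) * r2 + ((1 - l) * t + l) * s2 by ring]
          ring
      _ = ∫ t in l..1, G t := by simp [mul_integral_comp_mul_add]
  rw [hfirst, hsecond, integral_add_adjacent_intervals (hG.intervalIntegrable _ _)
    (hG.intervalIntegrable _ _)]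
  rfl

theorem rectDiff_add_fst_eq_add_snd (hf : ContDiff ℝ 1 f) (h : AumannShapleyEqShapleyShubik f)
    {w v : ℝ} (hw : 0 ≤ w) (hv : 0 ≤ v) (a c : ℝ) :
    rectDiff f (a + w) c w v = rectDiff f a (c + v) w v := by
  have hsplit := aumannShapleySnd_add hf a c (a + 2 * w) (c + 2 * v) (1 / 2)
  rw [show (1 - 1 / 2) * a + 1 / 2 * (a + 2 * w) = a + w by ring,
    show (1 - 1 / 2) * c + 1 / 2 * (c + 2 * v) = c + v by ring,
    h _ _ _ _ (by linarith) (by linarith), h _ _ _ _ (by linarith) (by linarith),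
    h _ _ _ _ (by linarith) (by linarith)] at hsplit
  simp only [shapleyShubikSnd] at hsplit
  simp only [rectDiff]
  ring_nf at hsplit ⊢
  linarith

theorem rectDiff_add_nat_mul_eq {w v : ℝ}
    (hshift : ∀ a c, rectDiff f (a + w) c w v = rectDiff f a (c + v) w v) (n : ℕ) (a c : ℝ) :
    rectDiff f (a + n * w) c w v = rectDiff f a (c + n * v) w v := by
  induction n generalizing a with
  | zero => simp
  | succ n ih =>
    push_cast
    rw [show a + (n + 1) * w = a + w + n * w by ring, ih, hshift,
      show c + n * v + v = c + (n + 1) * v by ring]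

theorem mixedPartial_eq_of_lt (hf : ContDiff ℝ 2 f) (h : AumannShapleyEqShapleyShubik f)
    {p1 p2 q1 q2 : ℝ} (h1 : p1 < q1) (h2 : q2 < p2) :
    mixedPartial f (p1, p2) = mixedPartial f (q1, q2) := by
  set cell : ℕ → ℝ × ℝ := fun n => ((n : ℝ)⁻¹ * (q1 - p1), (n : ℝ)⁻¹ * (p2 - q2))
  have hcell : Tendsto cell atTop (𝓝 (0, 0)) := by
    have := tendsto_inv_atTop_nhds_zero_nat (𝕜 := ℝ)
    simpa using (this.mul_const (q1 - p1)).prodMk_nhds (this.mul_const (p2 - q2))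
  have heq : ∀ᶠ n in atTop, rectAverage (mixedPartial f) p1 p2 (cell n).1 (cell n).2 =
      rectAverage (mixedPartial f) q1 q2 (cell n).1 (cell n).2 := by
    filter_upwards [eventually_gt_atTop 0] with n hn
    replace hn : (0 : ℝ) < n := by exact_mod_cast hn
    have hw : 0 < (cell n).1 := mul_pos (inv_pos.mpr hn) (sub_pos.mpr h1)
    have hv : 0 < (cell n).2 := mul_pos (inv_pos.mpr hn) (sub_pos.mpr h2)
    have hlattice := rectDiff_add_nat_mul_eq
      (rectDiff_add_fst_eq_add_snd (hf.of_le one_le_two) h hw.le hv.le) n p1 q2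
    rw [show p1 + n * (cell n).1 = q1 by simp only [cell]; field_simp; ring,
      show q2 + n * (cell n).2 = p2 by simp only [cell]; field_simp; ring,
      rectDiff_eq_mul_rectAverage hf, rectDiff_eq_mul_rectAverage hf] at hlattice
    exact (mul_left_cancel₀ (mul_pos hw hv).ne' hlattice).symm
  have hlim : ∀ a c, Tendsto (fun n => rectAverage (mixedPartial f) a c (cell n).1 (cell n).2)
      atTop (𝓝 (mixedPartial f (a, c))) := fun a c => by
    simpa [rectAverage_zero, Function.comp_def] using
      ((continuous_rectAverage (continuous_mixedPartial hf) a c).tendsto (0, 0)).comp hcell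
  exact tendsto_nhds_unique_of_eventuallyEq (hlim p1 p2) (hlim q1 q2) heq

theorem mixedPartial_eq (hf : ContDiff ℝ 2 f) (h : AumannShapleyEqShapleyShubik f)
    (p q : ℝ × ℝ) : mixedPartial f p = mixedPartial f q := by
  have hp : mixedPartial f p = mixedPartial f (max p.1 q.1 + 1, min p.2 q.2 - 1) :=
    mixedPartial_eq_of_lt hf h (by linarith [le_max_left p.1 q.1])
      (by linarith [min_le_left p.2 q.2])
  have hq : mixedPartial f q = mixedPartial f (max p.1 q.1 + 1, min p.2 q.2 - 1) :=
    mixedPartial_eq_of_lt hf h (by linarith [le_max_right p.1 q.1])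
      (by linarith [min_le_right p.2 q.2])
  rw [hp, hq]

end

theorem AS_eq_SS_implies_mixed_partial_constant
    (f : ℝ × ℝ → ℝ) (hf : ContDiff ℝ 2 f)
    (h : ∀ r1 r2 s1 s2 : ℝ, r1 ≤ s1 → r2 ≤ s2 →
      (∫ t in (0:ℝ)..1,
          deriv (fun y => f ((1 - t) * r1 + t * s1, y))
            ((1 - t) * r2 + t * s2) * (s2 - r2)) =
        (f (s1, s2) - f (s1, r2)) / 2 + (f (r1, s2) - f (r1, r2)) / 2) :
    ∃ (c : ℝ) (g1 g2 : ℝ → ℝ),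
      ∀ x1 x2 : ℝ, f (x1, x2) = c * x1 * x2 + g1 x1 + g2 x2 := by
  refine ⟨mixedPartial f (0, 0), fun x => f (x, 0), fun y => f (0, y) - f (0, 0), fun x1 x2 => ?_⟩
  have hrect := rectDiff_eq_mul_rectAverage hf 0 0 x1 x2
  have havg : rectAverage (mixedPartial f) 0 0 x1 x2 = mixedPartial f (0, 0) := by
    simp [rectAverage, mixedPartial_eq hf h _ (0, 0)]
  rw [havg] at hrect
  simp only [rectDiff, zero_add] at hrect
  linear_combination hrect
end

section
/- Let $g : \mathbb{R}^2 \to \mathbb{R}$ be continuous and suppose that for every $p \in \mathbb{R}^2$ and every $x = (x_1, x_2)$ with $x_1, x_2 > 0$ and every positive integer $n$: $\int_{[p_1, p_1+x_1]\times[p_2+x_2, p_2+2x_2]} g = \int_{[p_1+(n+1)x_1, p_1+(n+2)x_1]\times[p_2-nx_2, p_2-(n-1)x_2]} g$. Then $g$ is constant. -/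
/-!
The average of a continuous `g` over a small rectangle centred at `r` tends to `g r` as the
rectangle shrinks. If `s` lies strictly to the lower right of `r`, the hypothesis with parameter
`n` says that the rectangles of sides `(s - r) / (n + 1)` centred at `r` and at `s` carry the same
integral, hence the same average; letting `n → ∞` gives `g r = g s`. Any two points lie to the
upper left of a common third one.
-/

open MeasureTheory Filter Topology Set

theorem ContinuousAt.tendsto_setAverage {X E ι : Type*} [TopologicalSpace X] [MeasurableSpace X]
    [OpensMeasurableSpace X] [NormedAddCommGroup E] [NormedSpace ℝ E] [CompleteSpace E]
    {μ : Measure X} [IsLocallyFiniteMeasure μ] {f : X → E} {x : X} (hf : ContinuousAt f x)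
    (hfm : StronglyMeasurableAtFilter f (𝓝 x) μ) {s : ι → Set X} {l : Filter ι}
    (hs : Tendsto s l (𝓝 x).smallSets) (hμ : ∀ᶠ i in l, μ.real (s i) ≠ 0) :
    Tendsto (fun i ↦ ⨍ y in s i, f y ∂μ) l (𝓝 (f x)) := by
  have h := (hf.integral_sub_linear_isLittleO_ae hfm hs).tendsto_inv_smul_nhds_zero
  rw [← tendsto_sub_nhds_zero_iff]
  refine h.congr' ?_
  filter_upwards [hμ] with i hi
  rw [smul_sub, inv_smul_smul₀ hi, setAverage_eq]

theorem Filter.Tendsto.smallSets_prod {α β ι : Type*} {la : Filter α} {lb : Filter β}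
    {l : Filter ι} {s : ι → Set α} {t : ι → Set β} (hs : Tendsto s l la.smallSets)
    (ht : Tendsto t l lb.smallSets) : Tendsto (fun i ↦ s i ×ˢ t i) l (la ×ˢ lb).smallSets := by
  rw [tendsto_smallSets_iff] at hs ht ⊢
  intro u hu
  obtain ⟨a, ha, b, hb, hab⟩ := mem_prod_iff.1 hu
  filter_upwards [hs a ha, ht b hb] with i hsi hti using (Set.prod_mono hsi hti).trans hab

def centeredRect (c : ℝ × ℝ) (a b : ℝ) : Set (ℝ × ℝ) :=
  Icc (c.1 - a) (c.1 + a) ×ˢ Icc (c.2 - b) (c.2 + b)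

theorem volume_real_centeredRect (c : ℝ × ℝ) {a b : ℝ} (ha : 0 ≤ a) (hb : 0 ≤ b) :
    volume.real (centeredRect c a b) = 2 * a * (2 * b) := by
  rw [centeredRect, Measure.volume_eq_prod, measureReal_prod_prod,
    Real.volume_real_Icc_of_le (by linarith), Real.volume_real_Icc_of_le (by linarith)]
  ring

theorem tendsto_centeredRect_smallSets (c : ℝ × ℝ) {ι : Type*} {l : Filter ι} {a b : ι → ℝ}
    (ha : Tendsto a l (𝓝 0)) (hb : Tendsto b l (𝓝 0)) :
    Tendsto (fun i ↦ centeredRect c (a i) (b i)) l (𝓝 c).smallSets := by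
  have hIcc : ∀ (x : ℝ) {d : ι → ℝ}, Tendsto d l (𝓝 0) →
      Tendsto (fun i ↦ Icc (x - d i) (x + d i)) l (𝓝 x).smallSets := fun x d hd ↦ by
    refine Tendsto.Icc (l₁ := 𝓝 x) ?_ ?_
    · simpa using tendsto_const_nhds.sub hd
    · simpa using tendsto_const_nhds.add hd
  rw [← Prod.mk.eta (p := c), nhds_prod_eq]
  exact (hIcc c.1 ha).smallSets_prod (hIcc c.2 hb)

def HasTranslatedRectangleIntegrals (g : ℝ × ℝ → ℝ) : Prop :=
  ∀ (p : ℝ × ℝ) (x1 x2 : ℝ), 0 < x1 → 0 < x2 → ∀ n : ℕ, 0 < n →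
      (∫ q in Set.Icc p.1 (p.1 + x1) ×ˢ Set.Icc (p.2 + x2) (p.2 + 2 * x2), g q) =
        ∫ q in Set.Icc (p.1 + ((n : ℝ) + 1) * x1) (p.1 + ((n : ℝ) + 2) * x1) ×ˢ
            Set.Icc (p.2 - (n : ℝ) * x2) (p.2 - ((n : ℝ) - 1) * x2), g q

theorem HasTranslatedRectangleIntegrals.setIntegral_centeredRect_eq {g : ℝ × ℝ → ℝ}
    (h : HasTranslatedRectangleIntegrals g) (c : ℝ × ℝ) {a b : ℝ} (ha : 0 < a) (hb : 0 < b)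
    {n : ℕ} (hn : 0 < n) :
    ∫ q in centeredRect c a b, g q =
      ∫ q in centeredRect (c.1 + 2 * (n + 1) * a, c.2 - 2 * (n + 1) * b) a b, g q := by
  have := h (c.1 - a, c.2 - 3 * b) (2 * a) (2 * b) (by positivity) (by positivity) n hn
  simp only [centeredRect]
  convert this using 5 <;> ring

theorem HasTranslatedRectangleIntegrals.apply_eq_of_lt_of_lt {g : ℝ × ℝ → ℝ} (hg : Continuous g)
    (h : HasTranslatedRectangleIntegrals g) {r s : ℝ × ℝ} (h1 : r.1 < s.1) (h2 : s.2 < r.2) :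
    g r = g s := by
  set a : ℕ → ℝ := fun n ↦ (s.1 - r.1) / (2 * (n + 1))
  set b : ℕ → ℝ := fun n ↦ (r.2 - s.2) / (2 * (n + 1))
  have ha : ∀ n, 0 < a n := fun n ↦ div_pos (by linarith) (by positivity)
  have hb : ∀ n, 0 < b n := fun n ↦ div_pos (by linarith) (by positivity)
  have hshift : ∀ n : ℕ, (r.1 + 2 * (n + 1) * a n, r.2 - 2 * (n + 1) * b n) = s := fun n ↦ by
    ext <;> simp only [a, b] <;> field_simp <;> ring
  have hlim : ∀ d : ℝ, Tendsto (fun n : ℕ ↦ d / (2 * (n + 1))) atTop (𝓝 0) := fun d ↦ by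
    have := (tendsto_one_div_add_atTop_nhds_zero_nat (𝕜 := ℝ)).const_mul (d / 2)
    rw [mul_zero] at this
    exact this.congr fun n ↦ by rw [mul_one_div, div_div]
  have hvol : ∀ c n, volume.real (centeredRect c (a n) (b n)) ≠ 0 := fun c n ↦ by
    rw [volume_real_centeredRect c (ha n).le (hb n).le]
    have := ha n; have := hb n
    positivity
  have avg : ∀ c, Tendsto (fun n ↦ ⨍ q in centeredRect c (a n) (b n), g q) atTop (𝓝 (g c)) :=
    fun c ↦ hg.continuousAt.tendsto_setAverage (hg.stronglyMeasurableAtFilter _ _)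
      (tendsto_centeredRect_smallSets c (hlim _) (hlim _)) (Eventually.of_forall (hvol c))
  refine tendsto_nhds_unique ((avg r).congr' ?_) (avg s)
  filter_upwards [eventually_gt_atTop 0] with n hn
  rw [setAverage_eq, setAverage_eq, h.setIntegral_centeredRect_eq r (ha n) (hb n) hn, hshift,
    volume_real_centeredRect r (ha n).le (hb n).le, volume_real_centeredRect s (ha n).le (hb n).le]

theorem continuous_constant_of_translated_rectangle_integrals
    (g : ℝ × ℝ → ℝ) (hg : Continuous g)
    (h : ∀ (p : ℝ × ℝ) (x1 x2 : ℝ), 0 < x1 → 0 < x2 → ∀ n : ℕ, 0 < n →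
      (∫ q in Set.Icc p.1 (p.1 + x1) ×ˢ Set.Icc (p.2 + x2) (p.2 + 2 * x2), g q) =
        ∫ q in Set.Icc (p.1 + ((n : ℝ) + 1) * x1) (p.1 + ((n : ℝ) + 2) * x1) ×ˢ
            Set.Icc (p.2 - (n : ℝ) * x2) (p.2 - ((n : ℝ) - 1) * x2), g q) :
    ∀ a b : ℝ × ℝ, g a = g b := by
  intro a b
  let c : ℝ × ℝ := (max a.1 b.1 + 1, min a.2 b.2 - 1)
  have hc : ∀ z : ℝ × ℝ, z.1 ≤ c.1 - 1 → c.2 + 1 ≤ z.2 → g z = g c := fun z h1 h2 ↦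
    HasTranslatedRectangleIntegrals.apply_eq_of_lt_of_lt hg h (by linarith) (by linarith)
  rw [hc a (by simp [c]) (by simp [c]), hc b (by simp [c]) (by simp [c])]
end
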